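/- (Static backtracking bound) Let 0 < α < β < 1 and ρ ∈ (0,1) satisfy the transience condition ρ ln((1-α)/α) + (1-ρ) ln((1-β)/β) < 0. Choose ρ̃ ∈ [ρ,1) with E^{ρ̃}[ln((1-ω)/ω)] < (1/2)·E^{ρ}[ln((1-ω)/ω)]. Then there is C > 0 such that for t large enough (depending on δ), for any static environment η ∈ {0,1}^ℤ with ⟨η⟩ over the box of radius t^δ/2 centered at -t^δ/2 at most ρ̃, the static random walk started at 0 satisfies S^η( inf_{0≤s≤t} X_s ≤ -t^δ ) ≤ e^{-C t^δ}. -/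

import Mathlib

/-!
To go below `-t^δ` the walk must reach `-L`, `L = ⌈t^δ⌉`. Cutting the path at its visits
to `0`, each of the at most `t` excursions below `0` reaches `-L` with probability at most
`S^η_{-1}(T_{-L} < T_0)`, which the scale function bounds by
`e^{V(-1) - V(-L)} = ∏_{j=-L+1}^{-1} (1-ω_j)/ω_j`. The density bound on `η` makes this product
at most `exp(E^{ρ̃}[ln((1-ω)/ω)] t^δ + O(1))`, and this expectation is negative, so the factor
`t` is absorbed for large `t`.
-/

open MeasureTheory

/-- Empirical average of `u` over the box `B(x,L) = [x-L, x+L] ∩ ℤ`. -/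
noncomputable def boxAvg (u : ℤ → ℝ) (x : ℤ) (L : ℕ) : ℝ :=
  (∑ y ∈ Finset.Icc (x - (L : ℤ)) (x + (L : ℤ)), u y) / (2 * (L : ℝ) + 1)

/-- `μ` is the law of the nearest-neighbour random walk on `ℤ` started at `0`
in the static environment `w` (jump right from `i` with probability `w i`,
left with probability `1 - w i`), characterized by its cylinder probabilities. -/
def IsWalkLaw (w : ℤ → ℝ) (μ : Measure (ℕ → ℤ)) : Prop :=
  IsProbabilityMeasure μ ∧
  ∀ (n : ℕ) (y : ℕ → ℤ), y 0 = 0 →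
    μ {f | ∀ k ≤ n, f k = y k} =
      ENNReal.ofReal (∏ k ∈ Finset.range n,
        (if y (k + 1) = y k + 1 then w (y k)
         else if y (k + 1) = y k - 1 then 1 - w (y k) else 0))

namespace RWRE

open Real Finset Filter

noncomputable def odds (p : ℝ) : ℝ := (1 - p) / p

def cylinder (y : ℕ → ℤ) (n : ℕ) : Set (ℕ → ℤ) := {f | ∀ k ≤ n, f k = y k}

def stepProb (w : ℤ → ℝ) (x z : ℤ) : ℝ :=
  if z = x + 1 then w x else if z = x - 1 then 1 - w x else 0

def pathProb (w : ℤ → ℝ) (y : ℕ → ℤ) (n : ℕ) : ℝ :=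
  ∏ k ∈ range n, stepProb w (y k) (y (k + 1))

open Classical in
/-- In the paper's notation, `hitProb w D K m x = S^η_x(T_D ≤ m, T_D < T_K)`. -/
noncomputable def hitProb (w : ℤ → ℝ) (D K : Set ℤ) : ℕ → ℤ → ℝ
  | 0, x => if x ∈ D then 1 else 0
  | m + 1, x => if x ∈ D then 1 else if x ∈ K then 0 else
      w x * hitProb w D K m (x + 1) + (1 - w x) * hitProb w D K m (x - 1)

section hitProb

variable {w : ℤ → ℝ} {D K : Set ℤ} {x : ℤ}

lemma hitProb_of_mem (hx : x ∈ D) : ∀ m, hitProb w D K m x = 1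
  | 0 => by simp [hitProb, hx]
  | _ + 1 => by simp [hitProb, hx]

lemma hitProb_of_mem_of_notMem (hxK : x ∈ K) (hxD : x ∉ D) : ∀ m, hitProb w D K m x = 0
  | 0 => by simp [hitProb, hxD]
  | _ + 1 => by simp [hitProb, hxD, hxK]

lemma hitProb_succ_of_notMem (hxD : x ∉ D) (hxK : x ∉ K) (m : ℕ) :
    hitProb w D K (m + 1) x =
      w x * hitProb w D K m (x + 1) + (1 - w x) * hitProb w D K m (x - 1) := by
  simp [hitProb, hxD, hxK]

lemma hitProb_nonneg (hw0 : ∀ i, 0 ≤ w i) (hw1 : ∀ i, w i ≤ 1) (m : ℕ) (x : ℤ) :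
    0 ≤ hitProb w D K m x := by
  induction m generalizing x with
  | zero => unfold hitProb; positivity
  | succ m ih =>
    by_cases hxD : x ∈ D
    · simp [hitProb_of_mem hxD]
    by_cases hxK : x ∈ K
    · simp [hitProb_of_mem_of_notMem hxK hxD]
    rw [hitProb_succ_of_notMem hxD hxK]
    exact add_nonneg (mul_nonneg (hw0 x) (ih _)) (mul_nonneg (sub_nonneg.2 (hw1 x)) (ih _))

lemma hitProb_le_succ (hw0 : ∀ i, 0 ≤ w i) (hw1 : ∀ i, w i ≤ 1) (m : ℕ) (x : ℤ) :
    hitProb w D K m x ≤ hitProb w D K (m + 1) x := by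
  induction m generalizing x with
  | zero =>
    by_cases hxD : x ∈ D
    · simp [hitProb_of_mem hxD]
    · rw [show hitProb w D K 0 x = 0 by simp [hitProb, hxD]]
      exact hitProb_nonneg hw0 hw1 1 x
  | succ m ih =>
    by_cases hxD : x ∈ D
    · simp [hitProb_of_mem hxD]
    by_cases hxK : x ∈ K
    · simp [hitProb_of_mem_of_notMem hxK hxD]
    rw [hitProb_succ_of_notMem hxD hxK, hitProb_succ_of_notMem hxD hxK]
    have := sub_nonneg.2 (hw1 x)
    gcongr
    exacts [hw0 x, ih _, ih _]

lemma hitProb_le_of_superharmonic (hw0 : ∀ i, 0 ≤ w i) (hw1 : ∀ i, w i ≤ 1) {ψ : ℤ → ℝ}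
    (hψ0 : ∀ x, 0 ≤ ψ x) (hψD : ∀ x ∈ D, 1 ≤ ψ x)
    (hψ : ∀ x, x ∉ D → x ∉ K → w x * ψ (x + 1) + (1 - w x) * ψ (x - 1) ≤ ψ x)
    (m : ℕ) (x : ℤ) : hitProb w D K m x ≤ ψ x := by
  induction m generalizing x with
  | zero =>
    by_cases hxD : x ∈ D
    · simpa [hitProb, hxD] using hψD x hxD
    · simpa [hitProb, hxD] using hψ0 x
  | succ m ih =>
    by_cases hxD : x ∈ D
    · simpa [hitProb_of_mem hxD] using hψD x hxD
    by_cases hxK : x ∈ K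
    · simpa [hitProb_of_mem_of_notMem hxK hxD] using hψ0 x
    rw [hitProb_succ_of_notMem hxD hxK]
    refine le_trans ?_ (hψ x hxD hxK)
    have := sub_nonneg.2 (hw1 x)
    gcongr
    exacts [hw0 x, ih _, ih _]

end hitProb

/-- Every visit to `0` gives the walk one more chance, of probability at most that of
reaching `-L` from `-1` before returning to `0`, to reach `-L`. -/
lemma hitProb_le_excursions {w : ℤ → ℝ} (hw0 : ∀ i, 0 ≤ w i) (hw1 : ∀ i, w i ≤ 1)
    {L : ℤ} (hL : 0 < L) (m : ℕ) (x : ℤ) :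
    hitProb w (Set.Iic (-L)) ∅ m x ≤
      hitProb w (Set.Iic (-L)) (Set.Ici 0) m x +
        m * hitProb w (Set.Iic (-L)) (Set.Ici 0) m (-1) := by
  have hg0 := hitProb_nonneg (D := Set.Iic (-L)) (K := Set.Ici 0) hw0 hw1
  induction m generalizing x with
  | zero => simp [hitProb]
  | succ m ih =>
    by_cases hxD : x ∈ Set.Iic (-L)
    · rw [hitProb_of_mem hxD, hitProb_of_mem hxD]
      linarith [mul_nonneg (m + 1).cast_nonneg (hg0 (m + 1) (-1))]
    have hw1x := sub_nonneg.2 (hw1 x)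
    have hstep : hitProb w (Set.Iic (-L)) ∅ (m + 1) x ≤
        w x * hitProb w (Set.Iic (-L)) (Set.Ici 0) m (x + 1) +
          (1 - w x) * hitProb w (Set.Iic (-L)) (Set.Ici 0) m (x - 1) +
            m * hitProb w (Set.Iic (-L)) (Set.Ici 0) m (-1) := by
      rw [hitProb_succ_of_notMem hxD (Set.notMem_empty x)]
      nlinarith [hw0 x, ih (x + 1), ih (x - 1)]
    have hreturn : w x * hitProb w (Set.Iic (-L)) (Set.Ici 0) m (x + 1) +
          (1 - w x) * hitProb w (Set.Iic (-L)) (Set.Ici 0) m (x - 1) ≤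
        hitProb w (Set.Iic (-L)) (Set.Ici 0) (m + 1) x +
          hitProb w (Set.Iic (-L)) (Set.Ici 0) m (-1) := by
      rw [Set.mem_Iic, not_le] at hxD
      by_cases hxK : 0 ≤ x
      · have hx1 : hitProb w (Set.Iic (-L)) (Set.Ici 0) m (x - 1) ≤
            hitProb w (Set.Iic (-L)) (Set.Ici 0) m (-1) := by
          rcases eq_or_lt_of_le hxK with rfl | hx
          · simp
          · rw [hitProb_of_mem_of_notMem (by simp; omega) (by simp; omega)]
            exact hg0 m (-1)
        rw [hitProb_of_mem_of_notMem (x := x + 1) (by simp; omega) (by simp; omega),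
          hitProb_of_mem_of_notMem (x := x) (by simpa using hxK) (by simp; omega)]
        nlinarith [hw0 x, hg0 m (x - 1)]
      · rw [hitProb_succ_of_notMem (by simp; omega) (by simpa using hxK)]
        linarith [hg0 m (-1)]
    push_cast
    nlinarith [hitProb_le_succ (D := Set.Iic (-L)) (K := Set.Ici 0) hw0 hw1 m (-1),
      hg0 m (-1)]

section scale

variable {w : ℤ → ℝ} {L x : ℤ}

lemma odds_pos {p : ℝ} (hp0 : 0 < p) (hp1 : p < 1) : 0 < odds p :=
  div_pos (sub_pos.2 hp1) hp0

/-- `oddsProd w L i = e^{V(i) - V(-L)}` for the potential `V` of the environment. -/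
noncomputable def oddsProd (w : ℤ → ℝ) (L i : ℤ) : ℝ := ∏ j ∈ Icc (-L + 1) i, odds (w j)

noncomputable def scaleFn (w : ℤ → ℝ) (L x : ℤ) : ℝ := ∑ i ∈ Icc x (-1), oddsProd w L i

lemma oddsProd_pos (hw0 : ∀ i, 0 < w i) (hw1 : ∀ i, w i < 1) (i : ℤ) : 0 < oddsProd w L i :=
  prod_pos fun j _ => odds_pos (hw0 j) (hw1 j)

lemma oddsProd_of_le (hi : x ≤ -L) : oddsProd w L x = 1 := by
  rw [oddsProd, Icc_eq_empty (by omega), prod_empty]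

lemma mul_oddsProd (hw0 : w x ≠ 0) (hx : -L < x) :
    w x * oddsProd w L x = (1 - w x) * oddsProd w L (x - 1) := by
  have : Icc (-L + 1) x = insert x (Icc (-L + 1) (x - 1)) := by ext; simp; omega
  rw [oddsProd, oddsProd, this, prod_insert (by simp), odds]
  field_simp

lemma scaleFn_eq_add (hx : x ≤ -1) : scaleFn w L x = oddsProd w L x + scaleFn w L (x + 1) := by
  have : Icc x (-1) = insert x (Icc (x + 1) (-1)) := by ext; simp; omega
  rw [scaleFn, scaleFn, this, sum_insert (by simp)]

lemma scaleFn_nonneg (hw0 : ∀ i, 0 < w i) (hw1 : ∀ i, w i < 1) : 0 ≤ scaleFn w L x :=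
  sum_nonneg fun i _ => (oddsProd_pos hw0 hw1 i).le

lemma one_le_scaleFn (hw0 : ∀ i, 0 < w i) (hw1 : ∀ i, w i < 1) (hxL : x ≤ -L) (hx : x ≤ -1) :
    1 ≤ scaleFn w L x := by
  rw [scaleFn_eq_add hx, oddsProd_of_le hxL]
  linarith [scaleFn_nonneg (L := L) (x := x + 1) hw0 hw1]

lemma scaleFn_harmonic (hw0 : w x ≠ 0) (hxL : -L < x) (hx : x < 0) :
    w x * scaleFn w L (x + 1) + (1 - w x) * scaleFn w L (x - 1) = scaleFn w L x := by
  have h1 := scaleFn_eq_add (w := w) (L := L) (x := x) (by omega)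
  have h2 := scaleFn_eq_add (w := w) (L := L) (x := x - 1) (by omega)
  rw [sub_add_cancel] at h2
  linear_combination (1 - w x) * h2 - w x * h1 - mul_oddsProd hw0 hxL

lemma scaleFn_neg_one : scaleFn w L (-1) = oddsProd w L (-1) := by
  rw [scaleFn, Icc_self, sum_singleton]

lemma hitProb_le_oddsProd (hw0 : ∀ i, 0 < w i) (hw1 : ∀ i, w i < 1) (hL : 0 < L) (m : ℕ) :
    hitProb w (Set.Iic (-L)) (Set.Ici 0) m (-1) ≤ oddsProd w L (-1) := by
  rw [← scaleFn_neg_one]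
  refine hitProb_le_of_superharmonic (ψ := scaleFn w L) (fun i => (hw0 i).le)
    (fun i => (hw1 i).le) (fun _ => scaleFn_nonneg hw0 hw1) ?_ ?_ m (-1)
  · intro x hx
    exact one_le_scaleFn hw0 hw1 hx (by rw [Set.mem_Iic] at hx; omega)
  · intro x hxD hxK
    rw [Set.mem_Iic, not_le] at hxD
    rw [Set.mem_Ici, not_le] at hxK
    exact (scaleFn_harmonic (hw0 x).ne' hxD hxK).le

end scale

section walkLaw

variable {w : ℤ → ℝ} {μ : Measure (ℕ → ℤ)}

lemma stepProb_nonneg (hw0 : ∀ i, 0 ≤ w i) (hw1 : ∀ i, w i ≤ 1) (x z : ℤ) :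
    0 ≤ stepProb w x z := by
  unfold stepProb
  split_ifs <;> linarith [hw0 x, hw1 x]

lemma pathProb_nonneg (hw0 : ∀ i, 0 ≤ w i) (hw1 : ∀ i, w i ≤ 1) (y : ℕ → ℤ) (n : ℕ) :
    0 ≤ pathProb w y n :=
  prod_nonneg fun _ _ => stepProb_nonneg hw0 hw1 _ _

lemma pathProb_update_succ (y : ℕ → ℤ) (n : ℕ) (z : ℤ) :
    pathProb w (Function.update y (n + 1) z) (n + 1) = pathProb w y n * stepProb w (y n) z := by
  rw [pathProb, prod_range_succ, Function.update_self, Function.update_of_ne (by omega)]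
  congr 1
  refine prod_congr rfl fun k hk => ?_
  rw [mem_range] at hk
  rw [Function.update_of_ne (by omega), Function.update_of_ne (by omega)]

lemma cylinder_subset_iUnion_update (y : ℕ → ℤ) (n : ℕ) :
    cylinder y n ⊆ ⋃ z, cylinder (Function.update y (n + 1) z) (n + 1) := by
  intro f hf
  refine Set.mem_iUnion.2 ⟨f (n + 1), fun k hk => ?_⟩
  rcases eq_or_lt_of_le hk with rfl | hk
  · simp
  · rw [Function.update_of_ne (by omega)]
    exact hf k (by omega)

lemma tsum_ofReal_stepProb_mul (hw0 : ∀ i, 0 ≤ w i) (hw1 : ∀ i, w i ≤ 1) {g : ℤ → ℝ}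
    (hg : ∀ z, 0 ≤ g z) (x : ℤ) :
    ∑' z, ENNReal.ofReal (stepProb w x z * g z) =
      ENNReal.ofReal (w x * g (x + 1) + (1 - w x) * g (x - 1)) := by
  have hne : x + 1 ≠ x - 1 := by omega
  rw [tsum_eq_sum (s := {x + 1, x - 1}), sum_pair hne,
    ENNReal.ofReal_add (mul_nonneg (hw0 x) (hg _)) (mul_nonneg (sub_nonneg.2 (hw1 x)) (hg _))]
  · simp [stepProb, hne.symm]
  · intro z hz
    simp only [mem_insert, mem_singleton, not_or] at hz
    simp [stepProb, hz.1, hz.2]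

lemma _root_.IsWalkLaw.measure_cylinder (hμ : IsWalkLaw w μ) {y : ℕ → ℤ} (hy : y 0 = 0)
    (n : ℕ) : μ (cylinder y n) = ENNReal.ofReal (pathProb w y n) :=
  hμ.2 n y hy

/-- The Markov property at time `n`. -/
lemma _root_.IsWalkLaw.measure_cylinder_inter_hit_le (hμ : IsWalkLaw w μ)
    (hw0 : ∀ i, 0 ≤ w i) (hw1 : ∀ i, w i ≤ 1) (D : Set ℤ) (m n : ℕ) {y : ℕ → ℤ}
    (hy : y 0 = 0) :
    μ (cylinder y n ∩ {f | ∃ s, n ≤ s ∧ s ≤ n + m ∧ f s ∈ D}) ≤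
      ENNReal.ofReal (pathProb w y n * hitProb w D ∅ m (y n)) := by
  induction m generalizing n y with
  | zero =>
    by_cases hD : y n ∈ D
    · rw [hitProb_of_mem hD, mul_one, ← hμ.measure_cylinder hy]
      exact measure_mono Set.inter_subset_left
    have : cylinder y n ∩ {f | ∃ s, n ≤ s ∧ s ≤ n + 0 ∧ f s ∈ D} = ∅ := by
      refine Set.eq_empty_of_forall_notMem fun f ⟨hf, s, hs1, hs2, hs⟩ => hD ?_
      obtain rfl : s = n := by omega
      rwa [← hf s le_rfl]
    simp only [this, measure_empty, zero_le]
  | succ m ih =>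
    by_cases hD : y n ∈ D
    · rw [hitProb_of_mem hD, mul_one, ← hμ.measure_cylinder hy]
      exact measure_mono Set.inter_subset_left
    have hsub : cylinder y n ∩ {f | ∃ s, n ≤ s ∧ s ≤ n + (m + 1) ∧ f s ∈ D} ⊆
        ⋃ z, cylinder (Function.update y (n + 1) z) (n + 1) ∩
          {f | ∃ s, n + 1 ≤ s ∧ s ≤ n + 1 + m ∧ f s ∈ D} := by
      rintro f ⟨hf, s, hs1, hs2, hs⟩
      obtain ⟨z, hz⟩ := Set.mem_iUnion.1 (cylinder_subset_iUnion_update y n hf)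
      have hsn : s ≠ n := by
        rintro rfl
        exact hD (hf _ le_rfl ▸ hs)
      exact Set.mem_iUnion.2 ⟨z, hz, s, by omega, by omega, hs⟩
    have hy' (z : ℤ) : Function.update y (n + 1) z 0 = 0 := by
      rw [Function.update_of_ne (by omega), hy]
    have hP := pathProb_nonneg hw0 hw1 y n
    calc _ ≤ ∑' z, μ (cylinder (Function.update y (n + 1) z) (n + 1) ∩
            {f | ∃ s, n + 1 ≤ s ∧ s ≤ n + 1 + m ∧ f s ∈ D}) :=
          (measure_mono hsub).trans (measure_iUnion_le _)
      _ ≤ ∑' z, ENNReal.ofReal (pathProb w y n) *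
            ENNReal.ofReal (stepProb w (y n) z * hitProb w D ∅ m z) := by
          refine ENNReal.tsum_le_tsum fun z => (ih (n + 1) (hy' z)).trans_eq ?_
          rw [pathProb_update_succ, Function.update_self, mul_assoc, ENNReal.ofReal_mul hP]
      _ = ENNReal.ofReal (pathProb w y n * hitProb w D ∅ (m + 1) (y n)) := by
          rw [ENNReal.tsum_mul_left, tsum_ofReal_stepProb_mul hw0 hw1
            (hitProb_nonneg hw0 hw1 m), ← ENNReal.ofReal_mul hP,
            hitProb_succ_of_notMem hD (Set.notMem_empty _)]

lemma _root_.IsWalkLaw.measure_hit_le (hμ : IsWalkLaw w μ) (hw0 : ∀ i, 0 ≤ w i)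
    (hw1 : ∀ i, w i ≤ 1) (D : Set ℤ) (t : ℕ) :
    μ {f | ∃ s ≤ t, f s ∈ D} ≤ ENNReal.ofReal (hitProb w D ∅ t 0) := by
  have : IsProbabilityMeasure μ := hμ.1
  have hmeas : MeasurableSet (cylinder (fun _ => 0) 0) := by
    have : cylinder (fun _ => 0) 0 = (fun f : ℕ → ℤ => f 0) ⁻¹' {0} := by
      ext f
      simp [cylinder]
    rw [this]
    exact measurable_pi_apply 0 (measurableSet_singleton 0)
  have hstart : μ (cylinder (fun _ => 0) 0)ᶜ = 0 := by
    rw [prob_compl_eq_zero_iff hmeas, hμ.measure_cylinder (y := fun _ => 0) rfl]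
    simp [pathProb]
  rw [← measure_inter_conull hstart, Set.inter_comm]
  simpa [pathProb] using hμ.measure_cylinder_inter_hit_le hw0 hw1 D t 0 (y := fun _ => 0) rfl

end walkLaw

theorem _root_.IsWalkLaw.measure_exists_le_neg_le {w : ℤ → ℝ} {μ : Measure (ℕ → ℤ)}
    (hμ : IsWalkLaw w μ) (hw0 : ∀ i, 0 < w i) (hw1 : ∀ i, w i < 1) {r : ℝ} (hr : 0 < r)
    (t : ℕ) :
    μ {f | ∃ s ≤ t, (f s : ℝ) ≤ -r} ≤ ENNReal.ofReal (t * oddsProd w ⌈r⌉ (-1)) := by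
  have hL : 0 < ⌈r⌉ := Int.ceil_pos.2 hr
  have hevent : {f : ℕ → ℤ | ∃ s ≤ t, (f s : ℝ) ≤ -r} =
      {f | ∃ s ≤ t, f s ∈ Set.Iic (-⌈r⌉)} := by
    ext f
    refine exists_congr fun s => and_congr_right fun _ => ?_
    rw [Set.mem_Iic, le_neg, ← Int.cast_neg, ← Int.ceil_le]
    omega
  rw [hevent]
  refine (hμ.measure_hit_le (fun i => (hw0 i).le) (fun i => (hw1 i).le) _ t).trans
    (ENNReal.ofReal_le_ofReal ?_)
  have h0 : hitProb w (Set.Iic (-⌈r⌉)) (Set.Ici 0) t 0 = 0 :=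
    hitProb_of_mem_of_notMem (by simp) (by simp; omega) t
  calc hitProb w (Set.Iic (-⌈r⌉)) ∅ t 0
      ≤ t * hitProb w (Set.Iic (-⌈r⌉)) (Set.Ici 0) t (-1) := by
        simpa [h0] using hitProb_le_excursions (fun i => (hw0 i).le) (fun i => (hw1 i).le) hL t 0
    _ ≤ t * oddsProd w ⌈r⌉ (-1) := by
        gcongr
        exact hitProb_le_oddsProd hw0 hw1 hL t

/-- `E^ρ[ln((1-ω)/ω)]` for `ω` equal to `α` with probability `ρ` and to `β` otherwise. -/
noncomputable def meanLogOdds (α β ρ : ℝ) : ℝ := ρ * log (odds α) + (1 - ρ) * log (odds β)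

lemma log_odds_lt_log_odds {α β : ℝ} (hα : 0 < α) (hαβ : α < β) (hβ : β < 1) :
    log (odds β) < log (odds α) := by
  refine log_lt_log (odds_pos (hα.trans hαβ) hβ) ?_
  rw [odds, odds, div_lt_div_iff₀ (hα.trans hαβ) hα]
  nlinarith

lemma prod_odds_eq_exp {α β : ℝ} (hα0 : 0 < α) (hα1 : α < 1) (hβ0 : 0 < β) (hβ1 : β < 1)
    (η : ℤ → Bool) (J : Finset ℤ) :
    ∏ j ∈ J, odds (if η j then α else β) =
      exp (#J * log (odds β) +
        (log (odds α) - log (odds β)) * ∑ j ∈ J, if η j then (1 : ℝ) else 0) := by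
  have h (j : ℤ) : odds (if η j then α else β) =
      exp (log (odds β) + (log (odds α) - log (odds β)) * if η j then 1 else 0) := by
    cases η j
    · simp [exp_log (odds_pos hβ0 hβ1)]
    · simp [exp_log (odds_pos hα0 hα1)]
  rw [prod_congr rfl fun j _ => h j, ← exp_sum, sum_add_distrib, sum_const, nsmul_eq_mul,
    mul_sum]

lemma sum_le_of_boxAvg_le {u : ℤ → ℝ} (hu : ∀ y, 0 ≤ u y) {x : ℤ} {L : ℕ} {ρ : ℝ}
    (h : boxAvg u x L ≤ ρ) {J : Finset ℤ} (hJ : J ⊆ Icc (x - L) (x + L)) :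
    ∑ y ∈ J, u y ≤ ρ * (2 * L + 1) := by
  rw [boxAvg, div_le_iff₀ (by positivity)] at h
  exact (sum_le_sum_of_subset_of_nonneg hJ fun y _ _ => hu y).trans h

lemma oddsProd_le_of_boxAvg_le {α β ρ r : ℝ} (hα0 : 0 < α) (hαβ : α < β) (hβ1 : β < 1)
    (hβ : log (odds β) ≤ 0) (hρ : 0 ≤ ρ) (hr : 0 < r) (η : ℤ → Bool)
    (hbox : boxAvg (fun y => if η y then (1 : ℝ) else 0) (-(⌈r / 2⌉₊ : ℤ)) ⌈r / 2⌉₊ ≤ ρ) :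
    oddsProd (fun i => if η i then α else β) ⌈r⌉ (-1) ≤
      exp (meanLogOdds α β ρ * r + (3 * ρ * (log (odds α) - log (odds β)) - log (odds β))) := by
  have hAB := log_odds_lt_log_odds hα0 hαβ hβ1
  have hr2 : (⌈r / 2⌉₊ : ℝ) < r / 2 + 1 := Nat.ceil_lt_add_one (by positivity)
  have hsub : Icc (-⌈r⌉ + 1) (-1) ⊆
      Icc (-(⌈r / 2⌉₊ : ℤ) - ⌈r / 2⌉₊) (-(⌈r / 2⌉₊ : ℤ) + ⌈r / 2⌉₊) := by
    have : ⌈r⌉ ≤ 2 * (⌈r / 2⌉₊ : ℤ) := Int.ceil_le.2 (by push_cast; linarith [Nat.le_ceil (r / 2)])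
    intro j
    simp only [mem_Icc]
    omega
  have hN := sum_le_of_boxAvg_le (fun y => by positivity) hbox hsub
  have hcard : (#(Icc (-⌈r⌉ + 1) (-1)) : ℝ) = ⌈r⌉ - 1 := by
    have : ((#(Icc (-⌈r⌉ + 1) (-1)) : ℕ) : ℤ) = ⌈r⌉ - 1 := by
      have := Int.ceil_pos.2 hr
      rw [Int.card_Icc, Int.toNat_of_nonneg] <;> omega
    exact_mod_cast this
  rw [oddsProd, prod_odds_eq_exp hα0 (hαβ.trans hβ1) (hα0.trans hαβ) hβ1, hcard, meanLogOdds]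
  refine exp_le_exp.2 ?_
  have hAB' : 0 ≤ log (odds α) - log (odds β) := by linarith
  nlinarith [Int.le_ceil r, mul_le_mul_of_nonneg_left hN hAB',
    mul_le_mul_of_nonneg_left hr2.le (mul_nonneg hρ hAB')]

lemma eventually_mul_exp_sub_rpow_le_one {δ c : ℝ} (hδ : 0 < δ) (hc : 0 < c) (K : ℝ) :
    ∀ᶠ t : ℕ in atTop, 1 ≤ t ∧ (t : ℝ) * exp (K - c * t ^ δ) ≤ 1 := by
  have hreal : ∀ᶠ x : ℝ in atTop, x * exp (K - c * x ^ δ) ≤ 1 := by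
    filter_upwards [(isLittleO_log_rpow_atTop hδ).bound (half_pos hc),
      (tendsto_rpow_atTop hδ).eventually_ge_atTop (2 * K / c), eventually_gt_atTop 0]
      with x hlog hK hx
    rw [norm_of_nonneg (rpow_nonneg hx.le δ)] at hlog
    rw [div_le_iff₀ hc] at hK
    calc x * exp (K - c * x ^ δ) = exp (log x + (K - c * x ^ δ)) := by
          rw [exp_add, exp_log hx]
      _ ≤ exp 0 := exp_le_exp.2 (by linarith [le_abs_self (log x), Real.norm_eq_abs (log x)])
      _ = 1 := exp_zero
  exact (eventually_ge_atTop 1).and (tendsto_natCast_atTop_atTop.eventually hreal)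

end RWRE

open RWRE

theorem static_backtracking_bound_general (α β ρ ρt : ℝ)
    (hα : 0 < α) (hαβ : α < β) (hβ : β < 1) (hρ0 : 0 < ρ)
    (htrans : ρ * Real.log ((1 - α) / α) + (1 - ρ) * Real.log ((1 - β) / β) < 0)
    (hρt0 : ρ ≤ ρt)
    (hhalf : ρt * Real.log ((1 - α) / α) + (1 - ρt) * Real.log ((1 - β) / β)
      < (1 / 2) * (ρ * Real.log ((1 - α) / α) + (1 - ρ) * Real.log ((1 - β) / β)))
    (δ : ℝ) (hδ : 0 < δ) :
    ∃ C : ℝ, 0 < C ∧ ∃ T : ℕ, ∀ t : ℕ, T ≤ t →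
      ∀ η : ℤ → Bool,
        boxAvg (fun y => if η y then (1 : ℝ) else 0)
            (-(⌈(t : ℝ) ^ δ / 2⌉₊ : ℤ)) ⌈(t : ℝ) ^ δ / 2⌉₊ ≤ ρt →
        ∀ μ : Measure (ℕ → ℤ), IsWalkLaw (fun i => if η i then α else β) μ →
          μ {f | ∃ s : ℕ, s ≤ t ∧ ((f s : ℝ) ≤ -(t : ℝ) ^ δ)}
            ≤ ENNReal.ofReal (Real.exp (-C * (t : ℝ) ^ δ)) := by
  have hE : meanLogOdds α β ρt < 0 := by unfold meanLogOdds odds; linarith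
  have hAB := log_odds_lt_log_odds hα hαβ hβ
  have hB : Real.log (odds β) ≤ 0 := by unfold meanLogOdds at hE; nlinarith
  set C := -meanLogOdds α β ρt / 2
  set K := 3 * ρt * (Real.log (odds α) - Real.log (odds β)) - Real.log (odds β)
  have hC : 0 < C := half_pos (neg_pos.2 hE)
  obtain ⟨T, hT⟩ := (eventually_mul_exp_sub_rpow_le_one hδ hC K).exists_forall_of_atTop
  refine ⟨C, hC, T, fun t ht η hbox μ hμ => ?_⟩
  obtain ⟨ht1, hdecay⟩ := hT t ht
  have hr : 0 < (t : ℝ) ^ δ := Real.rpow_pos_of_pos (Nat.cast_pos.2 ht1) δ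
  have hw0 (i : ℤ) : 0 < if η i then α else β := by split <;> linarith
  have hw1 (i : ℤ) : (if η i then α else β) < 1 := by split <;> linarith
  refine (hμ.measure_exists_le_neg_le hw0 hw1 hr t).trans (ENNReal.ofReal_le_ofReal ?_)
  calc (t : ℝ) * oddsProd (fun i => if η i then α else β) ⌈(t : ℝ) ^ δ⌉ (-1)
      ≤ t * Real.exp (meanLogOdds α β ρt * t ^ δ + K) := by
        gcongr
        exact oddsProd_le_of_boxAvg_le hα hαβ hβ hB (by linarith) hr η hbox
    _ = t * Real.exp (K - C * t ^ δ) * Real.exp (-C * t ^ δ) := by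
        rw [mul_assoc, ← Real.exp_add, show meanLogOdds α β ρt = -2 * C by ring]
        ring_nf
    _ ≤ Real.exp (-C * t ^ δ) := mul_le_of_le_one_left (Real.exp_pos _).le hdecay

/-- static backtracking bound.  Under the transience condition and
with `ρ̃` as specified, there is `C > 0` such that for `t` large enough, for any
static environment `η` whose empirical density on the box of radius `t^δ/2`
centered at `-t^δ/2` is at most `ρ̃`, the static walk satisfies
`S^η(inf_{0≤s≤t} X_s ≤ -t^δ) ≤ e^{-C t^δ}`. -/
theorem static_backtracking_bound (α β ρ ρt : ℝ)
    (hα : 0 < α) (hαβ : α < β) (hβ : β < 1) (hρ0 : 0 < ρ) (hρ1 : ρ < 1)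
    (htrans : ρ * Real.log ((1 - α) / α) + (1 - ρ) * Real.log ((1 - β) / β) < 0)
    (hρt0 : ρ ≤ ρt) (hρt1 : ρt < 1)
    (hhalf : ρt * Real.log ((1 - α) / α) + (1 - ρt) * Real.log ((1 - β) / β)
      < (1 / 2) * (ρ * Real.log ((1 - α) / α) + (1 - ρ) * Real.log ((1 - β) / β)))
    (δ : ℝ) (hδ : 0 < δ) :
    ∃ C : ℝ, 0 < C ∧ ∃ T : ℕ, ∀ t : ℕ, T ≤ t →
      ∀ η : ℤ → Bool,
        boxAvg (fun y => if η y then (1 : ℝ) else 0)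
            (-(⌈(t : ℝ) ^ δ / 2⌉₊ : ℤ)) ⌈(t : ℝ) ^ δ / 2⌉₊ ≤ ρt →
        ∀ μ : Measure (ℕ → ℤ), IsWalkLaw (fun i => if η i then α else β) μ →
          μ {f | ∃ s : ℕ, s ≤ t ∧ ((f s : ℝ) ≤ -(t : ℝ) ^ δ)}
            ≤ ENNReal.ofReal (Real.exp (-C * (t : ℝ) ^ δ)) :=
  static_backtracking_bound_general α β ρ ρt hα hαβ hβ hρ0 htrans hρt0 hhalf δ hδ
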